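/- arXiv:2409.04671 — 5 statements merged into one kernel-verified Lean document; each statement's English description precedes it below -/
import Mathlib

section
/- Let F = (f₁,…,f_m) with each f_j differentiable on a compact convex set P. If x* ∈ P is weakly Pareto optimal and each f_j is convex, then min over u ∈ P of max over j of ⟨∇f_j(x*), u − x*⟩ equals 0 (i.e., the Frank–Wolfe gap vanishes at x*). -/
open scoped RealInnerProductSpace
open Filter Topology

/-!
Taking `u = x*` shows the value `0` is attained. If some `u ∈ P` gave a negative value, `u - x*`
would be a descent direction for every `f_j` at once, so a short step from `x*` towards `u`
would stay in `P` (convexity) and decrease all objectives, contradicting weak Pareto optimality.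
-/

theorem HasDerivAt.eventually_lt_of_neg {φ : ℝ → ℝ} {d a : ℝ} (h : HasDerivAt φ d a)
    (hd : d < 0) : ∀ᶠ t in 𝓝[>] a, φ t < φ a := by
  have hslope : ∀ᶠ t in 𝓝[>] a, slope φ a t < 0 :=
    (h.tendsto_slope.mono_left (nhdsGT_le_nhdsNE a)).eventually (eventually_lt_nhds hd)
  filter_upwards [hslope, self_mem_nhdsWithin] with t ht (hat : a < t)
  rw [slope_def_field, div_neg_iff] at ht
  rcases ht with ⟨-, hneg⟩ | ⟨hpos, -⟩ <;> linarith

theorem HasFDerivAt.eventually_add_smul_lt {E : Type*} [NormedAddCommGroup E] [NormedSpace ℝ E]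
    {f : E → ℝ} {f' : E →L[ℝ] ℝ} {x v : E} (hf : HasFDerivAt f f' x) (hv : f' v < 0) :
    ∀ᶠ t in 𝓝[>] (0 : ℝ), f (x + t • v) < f x := by
  have hline : HasDerivAt (fun t : ℝ ↦ x + t • v) v 0 := by
    simpa using ((hasDerivAt_id (0 : ℝ)).smul_const v).const_add x
  have hcomp : HasDerivAt (fun t : ℝ ↦ f (x + t • v)) (f' v) 0 :=
    (by simpa using hf : HasFDerivAt f f' (x + (0 : ℝ) • v)).comp_hasDerivAt 0 hline
  simpa using hcomp.eventually_lt_of_neg hv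

theorem exists_fderiv_nonneg_of_weak_pareto {ι E : Type*} [Finite ι] [NormedAddCommGroup E]
    [NormedSpace ℝ E] {P : Set E} (hP : Convex ℝ P) {f : ι → E → ℝ} {f' : ι → E →L[ℝ] ℝ}
    {x u : E} (hf : ∀ j, HasFDerivAt (f j) (f' j) x) (hx : x ∈ P) (hu : u ∈ P)
    (hweak : ¬ ∃ y ∈ P, ∀ j, f j y < f j x) : ∃ j, 0 ≤ f' j (u - x) := by
  by_contra! hdesc
  have hdecrease : ∀ᶠ t in 𝓝[>] (0 : ℝ), ∀ j, f j (x + t • (u - x)) < f j x :=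
    eventually_all.2 fun j ↦ (hf j).eventually_add_smul_lt (hdesc j)
  obtain ⟨t, hlt, ht⟩ :=
    (hdecrease.and (Ioc_mem_nhdsGT_of_mem ⟨le_rfl, zero_lt_one⟩)).exists
  exact hweak ⟨_, hP.add_smul_sub_mem hx hu (Set.Ioc_subset_Icc_self ht), hlt⟩

theorem weak_pareto_implies_zero_gap_general {n m : ℕ}
    (P : Set (EuclideanSpace ℝ (Fin n))) (hP : Convex ℝ P)
    (f : Fin m → EuclideanSpace ℝ (Fin n) → ℝ)
    (g : Fin m → EuclideanSpace ℝ (Fin n) → EuclideanSpace ℝ (Fin n))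
    (hgrad : ∀ j x, HasGradientAt (f j) (g j x) x)
    (xstar : EuclideanSpace ℝ (Fin n)) (hx : xstar ∈ P)
    (hweak : ¬ ∃ x ∈ P, ∀ j, f j x < f j xstar) :
    IsLeast {r : ℝ | ∃ u ∈ P, r = ⨆ j : Fin m, ⟪g j xstar, u - xstar⟫} 0 := by
  refine ⟨⟨xstar, hx, by simp⟩, ?_⟩
  rintro _ ⟨u, hu, rfl⟩
  obtain ⟨j, hj⟩ := exists_fderiv_nonneg_of_weak_pareto hP (fun j ↦ hgrad j xstar) hx hu hweak
  rw [InnerProductSpace.toDual_apply_apply] at hj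
  exact hj.trans <|
    le_ciSup (f := fun j ↦ ⟪g j xstar, u - xstar⟫) (Set.finite_range _).bddAbove j

theorem weak_pareto_implies_zero_gap {n m : ℕ} [NeZero m]
    (P : Set (EuclideanSpace ℝ (Fin n))) (hP : Convex ℝ P)
    (hPc : IsCompact P) (hPne : P.Nonempty)
    (f : Fin m → EuclideanSpace ℝ (Fin n) → ℝ)
    (g : Fin m → EuclideanSpace ℝ (Fin n) → EuclideanSpace ℝ (Fin n))
    (hconv : ∀ j, ConvexOn ℝ P (f j))
    (hgrad : ∀ j x, HasGradientAt (f j) (g j x) x)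
    (xstar : EuclideanSpace ℝ (Fin n)) (hx : xstar ∈ P)
    (hweak : ¬ ∃ x ∈ P, ∀ j, f j x < f j xstar) :
    IsLeast {r : ℝ | ∃ u ∈ P, r = ⨆ j : Fin m, ⟪g j xstar, u - xstar⟫} 0 :=
  weak_pareto_implies_zero_gap_general P hP f g hgrad xstar hx hweak
end

section
/- If f is μ-strongly convex and differentiable and f(x) ≥ f(x*), then ⟨∇f(x), x* − x⟩ ≤ −‖x − x*‖ · √(2μ(f(x) − f(x*))). -/
open scoped RealInnerProductSpace

theorem strongly_convex_grad_ineq {n : ℕ}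
    (f : EuclideanSpace ℝ (Fin n) → ℝ)
    (g : EuclideanSpace ℝ (Fin n) → EuclideanSpace ℝ (Fin n))
    (hgrad : ∀ x, HasGradientAt f (g x) x)
    (μ : ℝ) (hμ : 0 < μ)
    (hsc : ∀ x y, f y ≥ f x + ⟪g x, y - x⟫ + μ / 2 * ‖y - x‖ ^ 2)
    (x xstar : EuclideanSpace ℝ (Fin n)) (hfx : f xstar ≤ f x) :
    ⟪g x, xstar - x⟫ ≤ -‖x - xstar‖ * Real.sqrt (2 * μ * (f x - f xstar)) := by
  have h := hsc x xstar
  set D := f x - f xstar with hD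
  have hD0 : 0 ≤ D := by linarith
  set s := Real.sqrt (2 * μ * D) with hs
  have hs0 : 0 ≤ s := Real.sqrt_nonneg _
  have hs2 : s ^ 2 = 2 * μ * D := Real.sq_sqrt (by positivity)
  set r := ‖x - xstar‖ with hr
  have hr' : ‖xstar - x‖ = r := by rw [hr, norm_sub_rev]
  rw [hr'] at h
  have hr0 : 0 ≤ r := norm_nonneg _
  have key : r * s ≤ D + μ / 2 * r ^ 2 := by
    nlinarith [sq_nonneg (s - μ * r), mul_pos hμ hμ]
  nlinarith
end

section
/- Let f₁,…,f_m be L-smooth and assume at iterate x^k: θ_k := max_j ⟨∇f_j(x^k), d^k⟩ < 0, and there is c > 0 with θ_k ≤ −c·√(σ_k), where σ_k := min_j (f_j(x^k) − f_j(x*)) ≥ 0 and ‖d^k‖ ≤ D. If x^{k+1} = x^k + λ_k d^k with λ_k = −θ_k/(L‖d^k‖²), then σ_{k+1} ≤ (1 − c²/(2LD²)) σ_k, where σ_{k+1} := min_j (f_j(x^{k+1}) − f_j(x*)). -/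
open scoped RealInnerProductSpace

theorem one_step_linear_contraction {n m : ℕ} [NeZero m]
    (f : Fin m → EuclideanSpace ℝ (Fin n) → ℝ)
    (g : Fin m → EuclideanSpace ℝ (Fin n) → EuclideanSpace ℝ (Fin n))
    (L : ℝ) (hL : 0 < L)
    (hsmooth : ∀ j x y, f j y ≤ f j x + ⟪g j x, y - x⟫ + L / 2 * ‖x - y‖ ^ 2)
    (xstar xk dk : EuclideanSpace ℝ (Fin n)) (hdk : dk ≠ 0)
    (D : ℝ) (hD : 0 < D) (hdD : ‖dk‖ ≤ D)
    (c : ℝ) (hc : 0 < c)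
    (θk : ℝ) (hθdef : θk = ⨆ j : Fin m, ⟪g j xk, dk⟫) (hθneg : θk < 0)
    (σk : ℝ) (hσdef : σk = ⨅ j : Fin m, (f j xk - f j xstar)) (hσ0 : 0 ≤ σk)
    (hgap : θk ≤ -c * Real.sqrt σk)
    (lamk : ℝ) (hlam : lamk = -θk / (L * ‖dk‖ ^ 2)) :
    (⨅ j : Fin m, (f j (xk + lamk • dk) - f j xstar)) ≤ (1 - c ^ 2 / (2 * L * D ^ 2)) * σk := by
  have hnd : (0:ℝ) < ‖dk‖ := norm_pos_iff.mpr hdk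
  have hnd2 : (0:ℝ) < ‖dk‖ ^ 2 := by positivity
  have hlampos : 0 < lamk := by
    rw [hlam]
    apply div_pos (by linarith) (by positivity)
  -- θ² ≥ c² σ
  have hθsq : c ^ 2 * σk ≤ θk ^ 2 := by
    have h1 : c * Real.sqrt σk ≤ -θk := by linarith
    have h2 : 0 ≤ c * Real.sqrt σk := by positivity
    have := mul_self_le_mul_self h2 h1
    have hs : Real.sqrt σk * Real.sqrt σk = σk := Real.mul_self_sqrt hσ0
    nlinarith
  -- inner bound
  have hinner : ∀ j, ⟪g j xk, dk⟫ ≤ θk := by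
    intro j
    rw [hθdef]
    exact le_ciSup (f := fun j : Fin m => (⟪g j xk, dk⟫ : ℝ))
      (Set.Finite.bddAbove (Set.finite_range _)) j
  set y := xk + lamk • dk with hy
  -- descent for each j
  have hdesc : ∀ j, f j y ≤ f j xk + (lamk * θk + L / 2 * (lamk ^ 2 * ‖dk‖ ^ 2)) := by
    intro j
    have h := hsmooth j xk y
    have hyx : y - xk = lamk • dk := by simp [hy]
    have hxy : ‖xk - y‖ ^ 2 = lamk ^ 2 * ‖dk‖ ^ 2 := by
      rw [← neg_sub, norm_neg, hyx, norm_smul]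
      rw [mul_pow]
      simp [sq_abs]
    rw [hyx, hxy, real_inner_smul_right] at h
    have : lamk * ⟪g j xk, dk⟫ ≤ lamk * θk :=
      mul_le_mul_of_nonneg_left (hinner j) hlampos.le
    linarith
  -- the quadratic
  have hC : lamk * θk + L / 2 * (lamk ^ 2 * ‖dk‖ ^ 2) = -θk ^ 2 / (2 * L * ‖dk‖ ^ 2) := by
    rw [hlam]
    field_simp
    ring
  -- minimizer j₀ of f j xk - f j xstar
  obtain ⟨j₀, hj₀⟩ := Finite.exists_min (fun j : Fin m => f j xk - f j xstar)
  have hσeq : σk = f j₀ xk - f j₀ xstar := by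
    rw [hσdef]
    exact le_antisymm (ciInf_le (Set.Finite.bddBelow (Set.finite_range _)) j₀)
      (le_ciInf hj₀)
  have hmain : (⨅ j : Fin m, (f j y - f j xstar)) ≤ σk - θk ^ 2 / (2 * L * ‖dk‖ ^ 2) := by
    calc (⨅ j : Fin m, (f j y - f j xstar)) ≤ f j₀ y - f j₀ xstar :=
          ciInf_le (Set.Finite.bddBelow (Set.finite_range _)) j₀
      _ ≤ f j₀ xk - f j₀ xstar + (lamk * θk + L / 2 * (lamk ^ 2 * ‖dk‖ ^ 2)) := by
          have := hdesc j₀; linarith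
      _ = σk - θk ^ 2 / (2 * L * ‖dk‖ ^ 2) := by rw [hC, hσeq]; ring
  -- compare quotients
  have hquot : c ^ 2 * σk / (2 * L * D ^ 2) ≤ θk ^ 2 / (2 * L * ‖dk‖ ^ 2) := by
    have h1 : c ^ 2 * σk / (2 * L * D ^ 2) ≤ θk ^ 2 / (2 * L * D ^ 2) := by gcongr
    have h2 : θk ^ 2 / (2 * L * D ^ 2) ≤ θk ^ 2 / (2 * L * ‖dk‖ ^ 2) :=
      div_le_div_of_nonneg_left (by positivity) (by positivity) (by nlinarith [mul_le_mul hdD hdD hnd.le hD.le])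
    linarith
  have : (⨅ j : Fin m, (f j y - f j xstar)) ≤ σk - c ^ 2 * σk / (2 * L * D ^ 2) := by
    linarith
  calc (⨅ j : Fin m, (f j y - f j xstar)) ≤ σk - c ^ 2 * σk / (2 * L * D ^ 2) := this
    _ = (1 - c ^ 2 / (2 * L * D ^ 2)) * σk := by ring
end

section
/- Let P be compact and f₁,…,f_m continuously differentiable. If x^k → x̄ in P and θ(x^k) → 0, where θ(x) := min_{u∈P} max_j ⟨∇f_j(x), u − x⟩, then θ(x̄) = 0; i.e., θ is continuous (as a function of x) on P. -/
/-!
For fixed `u`, the map `y ↦ max_j ⟪g_j y, u - y⟫` is continuous, so `θ`, an infimum of such maps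
over `u ∈ P` (bounded below by compactness of `P`), is upper semicontinuous; hence
`0 = lim θ(x^k) ≤ θ(x̄)`. Conversely `θ(x̄) ≤ 0` by taking `u = x̄ ∈ P`.
-/

open scoped RealInnerProductSpace
open Filter Set Topology

theorem continuous_iSup_of_finite {X ι γ : Type*} [TopologicalSpace X] [Finite ι]
    [ConditionallyCompleteLinearOrder γ] [TopologicalSpace γ] [OrderTopology γ]
    {F : ι → X → γ} (hF : ∀ i, Continuous (F i)) : Continuous fun x => ⨆ i, F i x := by
  rcases isEmpty_or_nonempty ι with hι | hι
  · simp only [iSup_of_empty']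
    exact continuous_const
  · have := Fintype.ofFinite ι
    simpa only [Finset.sup'_univ_eq_ciSup] using
      Continuous.finset_sup'_apply Finset.univ_nonempty fun i _ => hF i

theorem UpperSemicontinuousAt.le_of_tendsto {α γ ι : Type*} [TopologicalSpace α]
    [LinearOrder γ] [DenselyOrdered γ] [TopologicalSpace γ] [OrderTopology γ]
    {f : α → γ} {a : α} (hf : UpperSemicontinuousAt f a) {l : Filter ι} [l.NeBot]
    {u : ι → α} {b : γ} (hu : Tendsto u l (𝓝 a)) (hfu : Tendsto (f ∘ u) l (𝓝 b)) :
    b ≤ f a := by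
  by_contra! h
  obtain ⟨c, hac, hcb⟩ := exists_between h
  obtain ⟨k, hk_lt, hk_gt⟩ :=
    ((hu.eventually (hf c hac)).and (hfu.eventually (lt_mem_nhds hcb))).exists
  exact lt_asymm hk_lt hk_gt

section Gap

variable {ι E : Type*} [NormedAddCommGroup E] [InnerProductSpace ℝ E]

/-- The largest of the directional derivatives `⟪∇f_j y, u - y⟫`, with `g j` standing for `∇f_j`. -/
noncomputable def maxDirDeriv (g : ι → E → E) (y u : E) : ℝ :=
  ⨆ j, ⟪g j y, u - y⟫

/-- The gap function `θ`. -/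
noncomputable def gap (g : ι → E → E) (P : Set E) (y : E) : ℝ :=
  sInf {r | ∃ u ∈ P, r = maxDirDeriv g y u}

theorem maxDirDeriv_self (g : ι → E → E) (y : E) : maxDirDeriv g y y = 0 := by
  simp only [maxDirDeriv, sub_self, inner_zero_right, Real.iSup_const_zero]

theorem continuous_maxDirDeriv [Finite ι] {g : ι → E → E} (hg : ∀ j, Continuous (g j)) :
    Continuous fun p : E × E => maxDirDeriv g p.1 p.2 :=
  continuous_iSup_of_finite fun j =>
    ((hg j).comp continuous_fst).inner (continuous_snd.sub continuous_fst)

theorem gap_eq_iInf (g : ι → E → E) (P : Set E) (y : E) :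
    gap g P y = ⨅ u : P, maxDirDeriv g y u := by
  rw [iInf, gap]
  congr 1
  ext r
  simp only [mem_ofPred_eq, mem_range, Subtype.exists, exists_prop, eq_comm]

variable [Finite ι] {g : ι → E → E} {P : Set E}

theorem bddBelow_range_maxDirDeriv (hP : IsCompact P) (hg : ∀ j, Continuous (g j)) (y : E) :
    BddBelow (range fun u : P => maxDirDeriv g y u) := by
  rw [← image_eq_range]
  exact hP.bddBelow_image
    ((continuous_maxDirDeriv hg).comp (Continuous.prodMk_right y)).continuousOn

theorem gap_le_zero (hP : IsCompact P) (hg : ∀ j, Continuous (g j)) {y : E} (hy : y ∈ P) :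
    gap g P y ≤ 0 := by
  rw [gap_eq_iInf, ← maxDirDeriv_self g y]
  exact ciInf_le (bddBelow_range_maxDirDeriv hP hg y) ⟨y, hy⟩

theorem upperSemicontinuous_gap (hP : IsCompact P) (hg : ∀ j, Continuous (g j)) :
    UpperSemicontinuous (gap g P) := by
  simp only [funext (gap_eq_iInf g P)]
  exact upperSemicontinuous_ciInf (bddBelow_range_maxDirDeriv hP hg) fun u =>
    ((continuous_maxDirDeriv hg).comp (Continuous.prodMk_left (u : E))).upperSemicontinuous

end Gap

theorem gap_limit_zero_general {n m : ℕ}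
    (P : Set (EuclideanSpace ℝ (Fin n)))
    (hPc : IsCompact P)
    (g : Fin m → EuclideanSpace ℝ (Fin n) → EuclideanSpace ℝ (Fin n))
    (hgcont : ∀ j, Continuous (g j))
    (x : ℕ → EuclideanSpace ℝ (Fin n))
    (xbar : EuclideanSpace ℝ (Fin n)) (hxbar : xbar ∈ P)
    (hconv : Filter.Tendsto x Filter.atTop (nhds xbar))
    (hθ : Filter.Tendsto
      (fun k => sInf {r : ℝ | ∃ u ∈ P, r = ⨆ j : Fin m, ⟪g j (x k), u - x k⟫})
      Filter.atTop (nhds 0)) :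
    sInf {r : ℝ | ∃ u ∈ P, r = ⨆ j : Fin m, ⟪g j xbar, u - xbar⟫} = 0 := by
  change gap g P xbar = 0
  change Tendsto (gap g P ∘ x) atTop (𝓝 0) at hθ
  exact le_antisymm (gap_le_zero hPc hgcont hxbar)
    (UpperSemicontinuousAt.le_of_tendsto (upperSemicontinuous_gap hPc hgcont xbar) hconv hθ)

theorem gap_limit_zero {n m : ℕ} [NeZero m]
    (P : Set (EuclideanSpace ℝ (Fin n))) (hP : Convex ℝ P)
    (hPc : IsCompact P) (hPne : P.Nonempty)
    (f : Fin m → EuclideanSpace ℝ (Fin n) → ℝ)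
    (g : Fin m → EuclideanSpace ℝ (Fin n) → EuclideanSpace ℝ (Fin n))
    (hgrad : ∀ j x, HasGradientAt (f j) (g j x) x)
    (hgcont : ∀ j, Continuous (g j))
    (x : ℕ → EuclideanSpace ℝ (Fin n)) (hxP : ∀ k, x k ∈ P)
    (xbar : EuclideanSpace ℝ (Fin n)) (hxbar : xbar ∈ P)
    (hconv : Filter.Tendsto x Filter.atTop (nhds xbar))
    (hθ : Filter.Tendsto
      (fun k => sInf {r : ℝ | ∃ u ∈ P, r = ⨆ j : Fin m, ⟪g j (x k), u - x k⟫})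
      Filter.atTop (nhds 0)) :
    sInf {r : ℝ | ∃ u ∈ P, r = ⨆ j : Fin m, ⟪g j xbar, u - xbar⟫} = 0 :=
  gap_limit_zero_general P hPc g hgcont x xbar hxbar hconv hθ
end

section
/- Adaptive step-size guarantee: if the backtracking loop terminates with smoothness estimate M and step λ = min{λ_max, −g/(M‖d‖²)} where g := max_j ⟨∇f_j(x), d⟩ < 0, and the exit condition max_j (f_j(x + λd) − f_j(x)) < λ g + (λ²M/2)‖d‖² holds, then max_j (f_j(x + λd) − f_j(x)) ≤ −min{λ_max·|g|, g²/(M‖d‖²)} + (λ²M/2)‖d‖², and in particular f_j(x + λd) < f_j(x) for all j. -/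
/-!
Multiplying the step `λ = min λ_max (−g/(M‖d‖²))` by `g < 0` turns the `min` into
`−min (λ_max |g|) (g²/(M‖d‖²))`, which makes the exit condition the claimed bound. Since
`λ ≤ −g/(M‖d‖²)`, the quadratic term is at most `−λg/2`, so the exit bound is below `λg/2 < 0`
and every `f_j` strictly decreases.
-/

theorem min_stepsize_mul_eq {g : ℝ} (hg : g ≤ 0) (lmax c : ℝ) :
    min lmax (-g / c) * g = -min (lmax * |g|) (g ^ 2 / c) := by
  rw [abs_of_nonpos hg, show g ^ 2 / c = -g / c * -g by ring,
    ← min_mul_of_nonneg _ _ (neg_nonneg.mpr hg)]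
  ring

theorem stepsize_model_neg {c lam g : ℝ} (hc : 0 < c) (hlam : 0 < lam) (hlam_le : lam ≤ -g / c)
    (hg : g < 0) : lam * g + lam ^ 2 * c / 2 < 0 := by
  rw [le_div_iff₀ hc] at hlam_le
  nlinarith

open scoped RealInnerProductSpace

theorem adaptive_stepsize_guarantee_general {n m : ℕ}
    (f : Fin m → EuclideanSpace ℝ (Fin n) → ℝ)
    (x d : EuclideanSpace ℝ (Fin n)) (hd : d ≠ 0)
    (gval : ℝ) (hgneg : gval < 0)
    (M : ℝ) (hM : 0 < M) (lammax : ℝ) (hlammax : 0 < lammax)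
    (lam : ℝ) (hlam : lam = min lammax (-gval / (M * ‖d‖ ^ 2)))
    (hexit : (⨆ j : Fin m, (f j (x + lam • d) - f j x)) <
      lam * gval + lam ^ 2 * M / 2 * ‖d‖ ^ 2) :
    (⨆ j : Fin m, (f j (x + lam • d) - f j x)) ≤
      -min (lammax * |gval|) (gval ^ 2 / (M * ‖d‖ ^ 2)) + lam ^ 2 * M / 2 * ‖d‖ ^ 2 ∧
      ∀ j, f j (x + lam • d) < f j x := by
  have hc : 0 < M * ‖d‖ ^ 2 := mul_pos hM (pow_pos (norm_pos_iff.mpr hd) 2)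
  have hlam_pos : 0 < lam := hlam ▸ lt_min hlammax (div_pos (neg_pos.mpr hgneg) hc)
  have hmodel : lam * gval + lam ^ 2 * M / 2 * ‖d‖ ^ 2 < 0 := by
    have := stepsize_model_neg hc hlam_pos (hlam ▸ min_le_right _ _) hgneg
    linarith
  refine ⟨?_, fun j => ?_⟩
  · rw [← min_stepsize_mul_eq hgneg.le, ← hlam]
    exact hexit.le
  · have := (le_ciSup (Finite.bddAbove_range _) j).trans_lt (hexit.trans hmodel)
    linarith

theorem adaptive_stepsize_guarantee {n m : ℕ} [NeZero m]
    (f : Fin m → EuclideanSpace ℝ (Fin n) → ℝ)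
    (gr : Fin m → EuclideanSpace ℝ (Fin n))
    (x d : EuclideanSpace ℝ (Fin n)) (hd : d ≠ 0)
    (gval : ℝ) (hgdef : gval = ⨆ j : Fin m, ⟪gr j, d⟫) (hgneg : gval < 0)
    (M : ℝ) (hM : 0 < M) (lammax : ℝ) (hlammax : 0 < lammax)
    (lam : ℝ) (hlam : lam = min lammax (-gval / (M * ‖d‖ ^ 2)))
    (hexit : (⨆ j : Fin m, (f j (x + lam • d) - f j x)) <
      lam * gval + lam ^ 2 * M / 2 * ‖d‖ ^ 2) :
    (⨆ j : Fin m, (f j (x + lam • d) - f j x)) ≤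
      -min (lammax * |gval|) (gval ^ 2 / (M * ‖d‖ ^ 2)) + lam ^ 2 * M / 2 * ‖d‖ ^ 2 ∧
      ∀ j, f j (x + lam • d) < f j x :=
  adaptive_stepsize_guarantee_general f x d hd gval hgneg M hM lammax hlammax lam hlam hexit
end
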